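/- (Minimax optimality of SMD, achievability direction.) Let ψ : ℝ^p → ℝ be strictly convex differentiable, ℓ : ℝ → ℝ differentiable with ℓ ≥ 0, f differentiable in its second argument, data (x_i, y_i) for i = 1, …, T, losses L_i(w) = ℓ(y_i − f(x_i, w)), and η > 0 such that ψ − ηL_i is convex for all i. Let w₀, …, w_T be the SMD iterates satisfying ∇ψ(w_i) = ∇ψ(w_{i−1}) − η ∇L_i(w_{i−1}). Then for every w ∈ ℝ^p, with v_i = y_i − f(x_i, w): D_ψ(w, w_T) + η ∑_{i=1}^T D_{L_i}(w, w_{i−1}) ≤ D_ψ(w, w₀) + η ∑_{i=1}^T ℓ(v_i). In particular, whenever the right-hand side is positive, the ratio of the left-hand side to the right-hand side is at most 1. -/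

import Mathlib

open RealInnerProductSpace

/-- Bregman divergence of a differentiable function `g` (defined formally for any `g`). -/
noncomputable def bregman {p : ℕ} (g : EuclideanSpace ℝ (Fin p) → ℝ)
    (w w' : EuclideanSpace ℝ (Fin p)) : ℝ :=
  g w - g w' - ⟪gradient g w', w - w'⟫

/-! The three-point identity for Bregman divergences turns the mirror step
`∇ψ(w_i) = ∇ψ(w_{i-1}) - η ∇L_i(w_{i-1})` into the exact balance
`D_ψ(w, w_i) + η D_{L_i}(w, w_{i-1})
  = D_ψ(w, w_{i-1}) + η L_i(w) - D_{ψ - η L_i}(w_i, w_{i-1}) - η L_i(w_i)`.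
The last two terms are nonpositive, by the first-order characterization of the convex function
`ψ - η L_i` and by `ℓ ≥ 0`, and summing the resulting inequalities over `i` telescopes. -/

open Finset

theorem ConvexOn.add_apply_sub_le_of_hasFDerivAt {E : Type*} [NormedAddCommGroup E]
    [NormedSpace ℝ E] {s : Set E} {g : E → ℝ} {g' : E →L[ℝ] ℝ} {a b : E}
    (hg : ConvexOn ℝ s g) (ha : a ∈ s) (hb : b ∈ s) (hg' : HasFDerivAt g g' b) :
    g b + g' (a - b) ≤ g a := by
  set γ : ℝ →ᵃ[ℝ] E := AffineMap.lineMap b a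
  have hγ0 : γ 0 = b := AffineMap.lineMap_apply_zero b a
  have hγ1 : γ 1 = a := AffineMap.lineMap_apply_one b a
  have hconv : ConvexOn ℝ (γ ⁻¹' s) (g ∘ γ) := hg.comp_affineMap γ
  have hderiv : HasDerivAt (g ∘ γ) (g' (a - b)) 0 :=
    (hγ0 ▸ hg').comp_hasDerivAt (0 : ℝ) AffineMap.hasDerivAt_lineMap
  have hslope := hconv.le_slope_of_hasDerivAt (x := 0) (y := 1)
    (show γ 0 ∈ s from hγ0 ▸ hb) (show γ 1 ∈ s from hγ1 ▸ ha) zero_lt_one hderiv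
  rw [slope_def_field, Function.comp_apply, Function.comp_apply, hγ0, hγ1, sub_zero,
    div_one] at hslope
  linarith

section Bregman

variable {p : ℕ}

theorem bregman_nonneg {g : EuclideanSpace ℝ (Fin p) → ℝ} {b : EuclideanSpace ℝ (Fin p)}
    (hg : ConvexOn ℝ Set.univ g) (hgb : DifferentiableAt ℝ g b) (a : EuclideanSpace ℝ (Fin p)) :
    0 ≤ bregman g a b := by
  have hfirst := hg.add_apply_sub_le_of_hasFDerivAt (Set.mem_univ a) (Set.mem_univ b)
    hgb.hasFDerivAt
  rw [bregman, inner_gradient_left]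
  linarith

theorem bregman_sub_const_mul {g h : EuclideanSpace ℝ (Fin p) → ℝ} {b : EuclideanSpace ℝ (Fin p)}
    (hgb : DifferentiableAt ℝ g b) (hhb : DifferentiableAt ℝ h b) (c : ℝ)
    (a : EuclideanSpace ℝ (Fin p)) :
    bregman (fun w => g w - c * h w) a b = bregman g a b - c * bregman h a b := by
  simp only [bregman, inner_gradient_left, fderiv_fun_sub hgb (hhb.const_mul c),
    fderiv_const_mul hhb, sub_apply, smul_apply, map_sub, smul_eq_mul]
  ring

theorem bregman_three_point (g : EuclideanSpace ℝ (Fin p) → ℝ) (a b c : EuclideanSpace ℝ (Fin p)) :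
    bregman g a c = bregman g a b - bregman g c b + ⟪gradient g b - gradient g c, a - c⟫ := by
  simp only [bregman, inner_sub_left, inner_sub_right]
  ring

theorem bregman_mirror_step_eq {ψ L : EuclideanSpace ℝ (Fin p) → ℝ} {η : ℝ}
    {b c : EuclideanSpace ℝ (Fin p)} (hstep : gradient ψ c = gradient ψ b - η • gradient L b)
    (a : EuclideanSpace ℝ (Fin p)) :
    bregman ψ a c + η * bregman L a b
      = bregman ψ a b + η * L a - (bregman ψ c b - η * bregman L c b) - η * L c := by
  rw [bregman_three_point ψ a b c, hstep, sub_sub_cancel, real_inner_smul_left]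
  simp only [bregman, inner_sub_right]
  ring

theorem bregman_mirror_step_le {ψ L : EuclideanSpace ℝ (Fin p) → ℝ} {η : ℝ}
    {b c : EuclideanSpace ℝ (Fin p)} (hψ : DifferentiableAt ℝ ψ b) (hL : DifferentiableAt ℝ L b)
    (hconv : ConvexOn ℝ Set.univ (fun w => ψ w - η * L w)) (hη : 0 ≤ η) (hLc : 0 ≤ L c)
    (hstep : gradient ψ c = gradient ψ b - η • gradient L b) (a : EuclideanSpace ℝ (Fin p)) :
    bregman ψ a c + η * bregman L a b ≤ bregman ψ a b + η * L a := by
  have hD : 0 ≤ bregman ψ c b - η * bregman L c b := by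
    rw [← bregman_sub_const_mul hψ hL]
    exact bregman_nonneg hconv (hψ.sub (hL.const_mul η)) c
  rw [bregman_mirror_step_eq hstep a]
  linarith [mul_nonneg hη hLc]

end Bregman

theorem add_sum_Icc_le_of_forall_le {α : Type*} [AddCommMonoid α] [PartialOrder α]
    [IsOrderedAddMonoid α] {u s r : ℕ → α} {T : ℕ}
    (h : ∀ i ∈ Icc 1 T, u i + s i ≤ u (i - 1) + r i) :
    u T + ∑ i ∈ Icc 1 T, s i ≤ u 0 + ∑ i ∈ Icc 1 T, r i := by
  induction T with
  | zero => simp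
  | succ n ih =>
    have hn := h (n + 1) (by simp)
    have ih := ih fun i hi => h i (Icc_subset_Icc_right n.le_succ hi)
    rw [Nat.add_sub_cancel] at hn
    rw [sum_Icc_succ_top (by omega), sum_Icc_succ_top (by omega)]
    calc u (n + 1) + (∑ i ∈ Icc 1 n, s i + s (n + 1))
        = (u (n + 1) + s (n + 1)) + ∑ i ∈ Icc 1 n, s i := by abel
      _ ≤ (u n + r (n + 1)) + ∑ i ∈ Icc 1 n, s i := add_le_add hn le_rfl
      _ = (u n + ∑ i ∈ Icc 1 n, s i) + r (n + 1) := by abel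
      _ ≤ (u 0 + ∑ i ∈ Icc 1 n, r i) + r (n + 1) := add_le_add ih le_rfl
      _ = u 0 + (∑ i ∈ Icc 1 n, r i + r (n + 1)) := by abel

theorem smd_minimax_achievability_general {m p : ℕ}
    (ψ : EuclideanSpace ℝ (Fin p) → ℝ)
    (hψdiff : Differentiable ℝ ψ)
    (ℓ : ℝ → ℝ) (hℓdiff : Differentiable ℝ ℓ) (hℓnonneg : ∀ t, 0 ≤ ℓ t)
    (f : EuclideanSpace ℝ (Fin m) → EuclideanSpace ℝ (Fin p) → ℝ)
    (hfdiff : ∀ a, Differentiable ℝ (fun w => f a w))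
    (x : ℕ → EuclideanSpace ℝ (Fin m)) (y : ℕ → ℝ)
    (η : ℝ) (hη : 0 < η)
    (T : ℕ)
    (L : ℕ → EuclideanSpace ℝ (Fin p) → ℝ)
    (hL : ∀ i, L i = fun w => ℓ (y i - f (x i) w))
    (hconv : ∀ i ∈ Finset.Icc 1 T, ConvexOn ℝ Set.univ (fun w => ψ w - η * L i w))
    (w : ℕ → EuclideanSpace ℝ (Fin p))
    (hupdate : ∀ i ∈ Finset.Icc 1 T,
      gradient ψ (w i) = gradient ψ (w (i - 1)) - η • gradient (L i) (w (i - 1))) :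
    ∀ wv : EuclideanSpace ℝ (Fin p),
      (bregman ψ wv (w T) + η * ∑ i ∈ Finset.Icc 1 T, bregman (L i) wv (w (i - 1))
          ≤ bregman ψ wv (w 0) + η * ∑ i ∈ Finset.Icc 1 T, ℓ (y i - f (x i) wv))
      ∧ (0 < bregman ψ wv (w 0) + η * ∑ i ∈ Finset.Icc 1 T, ℓ (y i - f (x i) wv) →
          (bregman ψ wv (w T) + η * ∑ i ∈ Finset.Icc 1 T, bregman (L i) wv (w (i - 1)))
            / (bregman ψ wv (w 0) + η * ∑ i ∈ Finset.Icc 1 T, ℓ (y i - f (x i) wv)) ≤ 1) := by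
  have hLdiff : ∀ i, Differentiable ℝ (L i) := fun i =>
    hL i ▸ hℓdiff.comp ((differentiable_const (y i)).sub (hfdiff (x i)))
  have hLnonneg : ∀ i v, 0 ≤ L i v := fun i v => hL i ▸ hℓnonneg _
  intro wv
  have hsum : bregman ψ wv (w T) + ∑ i ∈ Icc 1 T, η * bregman (L i) wv (w (i - 1))
      ≤ bregman ψ wv (w 0) + ∑ i ∈ Icc 1 T, η * ℓ (y i - f (x i) wv) := by
    refine add_sum_Icc_le_of_forall_le (u := fun n => bregman ψ wv (w n)) fun i hi => ?_
    have hstep := bregman_mirror_step_le (hψdiff _) (hLdiff i _) (hconv i hi) hη.le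
      (hLnonneg i (w i)) (hupdate i hi) wv
    rwa [hL i] at hstep ⊢
  rw [← mul_sum, ← mul_sum] at hsum
  exact ⟨hsum, fun hpos => (div_le_one hpos).mpr hsum⟩

/-- Minimax optimality of SMD (achievability direction): along the SMD iterates,
`D_ψ(w, w_T) + η ∑ D_{L_i}(w, w_{i−1}) ≤ D_ψ(w, w₀) + η ∑ ℓ(v_i)`, and hence the
corresponding ratio is at most `1` whenever the denominator is positive. -/
theorem smd_minimax_achievability {m p : ℕ}
    (ψ : EuclideanSpace ℝ (Fin p) → ℝ)
    (hψdiff : Differentiable ℝ ψ)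
    (hψconv : StrictConvexOn ℝ Set.univ ψ)
    (ℓ : ℝ → ℝ) (hℓdiff : Differentiable ℝ ℓ) (hℓnonneg : ∀ t, 0 ≤ ℓ t)
    (f : EuclideanSpace ℝ (Fin m) → EuclideanSpace ℝ (Fin p) → ℝ)
    (hfdiff : ∀ a, Differentiable ℝ (fun w => f a w))
    (x : ℕ → EuclideanSpace ℝ (Fin m)) (y : ℕ → ℝ)
    (η : ℝ) (hη : 0 < η)
    (T : ℕ)
    (L : ℕ → EuclideanSpace ℝ (Fin p) → ℝ)
    (hL : ∀ i, L i = fun w => ℓ (y i - f (x i) w))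
    (hconv : ∀ i ∈ Finset.Icc 1 T, ConvexOn ℝ Set.univ (fun w => ψ w - η * L i w))
    (w : ℕ → EuclideanSpace ℝ (Fin p))
    (hupdate : ∀ i ∈ Finset.Icc 1 T,
      gradient ψ (w i) = gradient ψ (w (i - 1)) - η • gradient (L i) (w (i - 1))) :
    ∀ wv : EuclideanSpace ℝ (Fin p),
      (bregman ψ wv (w T) + η * ∑ i ∈ Finset.Icc 1 T, bregman (L i) wv (w (i - 1))
          ≤ bregman ψ wv (w 0) + η * ∑ i ∈ Finset.Icc 1 T, ℓ (y i - f (x i) wv))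
      ∧ (0 < bregman ψ wv (w 0) + η * ∑ i ∈ Finset.Icc 1 T, ℓ (y i - f (x i) wv) →
          (bregman ψ wv (w T) + η * ∑ i ∈ Finset.Icc 1 T, bregman (L i) wv (w (i - 1)))
            / (bregman ψ wv (w 0) + η * ∑ i ∈ Finset.Icc 1 T, ℓ (y i - f (x i) wv)) ≤ 1) :=
  smd_minimax_achievability_general ψ hψdiff ℓ hℓdiff hℓnonneg f hfdiff x y η hη T L hL hconv w
    hupdate
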